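/- arXiv:math/9909070 — 2 statements merged into one kernel-verified Lean document; each statement's English description precedes it below -/
import Mathlib

section
/- The Magnus expansion M : F_i → ℤ[[X₁,...,X_i]], defined on the free group F_i on i generators by sending the generator x_j to 1 + X_j, is an injective group homomorphism into the group of units of the ring of formal power series in i non-commuting variables with integer coefficients. -/
open scoped Classical

noncomputable section

/-- Formal power series in non-commuting variables indexed by `σ`, with
coefficients in `R`: a series is given by the function assigning to each word
(non-commutative monomial) in the variables its coefficient. -/
def NCSeries (σ R : Type*) := List σ → R

namespace NCSeries

variable {σ : Type*} {R : Type*} [CommRing R]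

instance : AddCommGroup (NCSeries σ R) := Pi.addCommGroup

instance : One (NCSeries σ R) := ⟨fun w => if w = [] then 1 else 0⟩

/-- Cauchy product of non-commutative power series. -/
instance : Mul (NCSeries σ R) :=
  ⟨fun f g w => ∑ n ∈ Finset.range (w.length + 1), f (w.take n) * g (w.drop n)⟩

theorem mul_apply (f g : NCSeries σ R) (w : List σ) :
    (f * g) w = ∑ n ∈ Finset.range (w.length + 1), f (w.take n) * g (w.drop n) :=
  rfl

theorem one_apply (w : List σ) : (1 : NCSeries σ R) w = if w = [] then 1 else 0 :=
  rfl

theorem add_apply (f g : NCSeries σ R) (w : List σ) : (f + g) w = f w + g w := rfl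

theorem zero_apply (w : List σ) : (0 : NCSeries σ R) w = 0 := rfl

instance instRing : Ring (NCSeries σ R) where
  __ := (inferInstance : AddCommGroup (NCSeries σ R))
  left_distrib f g h := funext fun w => by
    simp [mul_apply, add_apply, mul_add, Finset.sum_add_distrib]
  right_distrib f g h := funext fun w => by
    simp [mul_apply, add_apply, add_mul, Finset.sum_add_distrib]
  zero_mul f := funext fun w => by simp [mul_apply, zero_apply]
  mul_zero f := funext fun w => by simp [mul_apply, zero_apply]
  mul_assoc f g h := funext fun w => by
    have tri : ∀ T : ℕ → ℕ → R,
        ∑ m ∈ Finset.range (w.length + 1), ∑ n ∈ Finset.range (m + 1), T n m =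
          ∑ n ∈ Finset.range (w.length + 1),
            ∑ p ∈ Finset.range (w.length - n + 1), T n (n + p) := by
      intro T
      rw [Finset.sum_sigma', Finset.sum_sigma']
      refine Finset.sum_nbij' (fun x => ⟨x.2, x.1 - x.2⟩)
        (fun x => ⟨x.1 + x.2, x.1⟩) ?_ ?_ ?_ ?_ ?_ <;>
        rintro ⟨a, b⟩ hab <;>
        simp only [Finset.mem_sigma, Finset.mem_range] at hab
      · simp only [Finset.mem_sigma, Finset.mem_range]; omega
      · simp only [Finset.mem_sigma, Finset.mem_range]; omega
      · dsimp only
        have : b + (a - b) = a := by omega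
        rw [this]
      · dsimp only
        have : a + b - a = b := by omega
        rw [this]
      · dsimp only
        have : b + (a - b) = a := by omega
        rw [this]
    calc (f * g * h) w
        = ∑ m ∈ Finset.range (w.length + 1), ∑ n ∈ Finset.range (m + 1),
            f (w.take n) * (g ((w.drop n).take (m - n)) * h (w.drop m)) := by
          rw [mul_apply]
          refine Finset.sum_congr rfl fun m hm => ?_
          rw [Finset.mem_range] at hm
          rw [mul_apply, Finset.sum_mul]
          have hlen : (w.take m).length = m := by rw [List.length_take]; omega
          rw [hlen]
          refine Finset.sum_congr rfl fun n hn => ?_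
          rw [Finset.mem_range] at hn
          rw [List.take_take, List.drop_take, min_eq_left (by omega : n ≤ m),
            mul_assoc]
      _ = ∑ n ∈ Finset.range (w.length + 1),
            ∑ p ∈ Finset.range (w.length - n + 1),
              f (w.take n) * (g ((w.drop n).take (n + p - n)) * h (w.drop (n + p))) :=
          tri fun n m => f (w.take n) * (g ((w.drop n).take (m - n)) * h (w.drop m))
      _ = (f * (g * h)) w := by
          rw [mul_apply]
          refine Finset.sum_congr rfl fun n hn => ?_
          rw [mul_apply, Finset.mul_sum]
          have hlen : (w.drop n).length = w.length - n := by simp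
          rw [hlen]
          refine Finset.sum_congr rfl fun p hp => ?_
          rw [List.drop_drop, Nat.add_sub_cancel_left]
  one_mul f := funext fun w => by
    rw [mul_apply, Finset.sum_eq_single 0]
    · simp [one_apply]
    · intro n hn hn0
      rw [Finset.mem_range] at hn
      have hw : w ≠ [] := by
        intro h
        subst h
        simp at hn
        omega
      have : w.take n ≠ [] := by
        simp [List.take_eq_nil_iff, hn0, hw]
      simp [one_apply, this]
    · simp
  mul_one f := funext fun w => by
    rw [mul_apply, Finset.sum_eq_single w.length]
    · simp [one_apply]
    · intro n hn hn0
      rw [Finset.mem_range] at hn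
      have : w.drop n ≠ [] := by
        simp only [ne_eq, List.drop_eq_nil_iff]
        omega
      simp [one_apply, this]
    · simp

/-- The non-commuting variable (indeterminate) `X j`. -/
def X (j : σ) : NCSeries σ R := fun w => if w = [j] then 1 else 0

/-- The geometric series `1 - X_j + X_j^2 - X_j^3 + ⋯`: its coefficient at the
word `X_j^n` is `(-1)^n`, and all other coefficients vanish. -/
def geom (j : σ) : NCSeries σ R := fun w =>
  if ∀ a ∈ w, a = j then (-1 : R) ^ w.length else 0

theorem onePlusX_apply (j : σ) (u : List σ) :
    (1 + X j : NCSeries σ R) u = if u = [] then 1 else if u = [j] then 1 else 0 := by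
  by_cases h : u = [] <;> simp [add_apply, one_apply, X, h]

theorem onePlusX_mul_geom (j : σ) : (1 + X j : NCSeries σ R) * geom j = 1 := by
  funext w
  cases w with
  | nil => simp [mul_apply, onePlusX_apply, one_apply, geom]
  | cons a t =>
    rw [mul_apply]
    show ∑ n ∈ Finset.range (t.length + 1 + 1), _ = _
    rw [Finset.sum_range_succ', Finset.sum_range_succ']
    have h2 : ∑ n ∈ Finset.range t.length,
        (1 + X j : NCSeries σ R) ((a :: t).take (n + 1 + 1)) *
          geom j ((a :: t).drop (n + 1 + 1)) = 0 := by
      refine Finset.sum_eq_zero fun n hn => ?_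
      rw [Finset.mem_range] at hn
      have ht : t ≠ [] := by intro h; subst h; simp at hn
      have h1 : (a :: t).take (n + 1 + 1) = a :: t.take (n + 1) := by
        simp [List.take_succ_cons]
      have hne : t.take (n + 1) ≠ [] := by
        simp [List.take_eq_nil_iff, ht]
      rw [h1, onePlusX_apply]
      simp [hne]
    rw [h2]
    simp only [List.take_succ_cons, List.take_zero, List.drop_succ_cons,
      List.drop_zero, List.take, List.drop]
    rw [onePlusX_apply, onePlusX_apply]
    by_cases ha : a = j
    · by_cases ht : ∀ x ∈ t, x = j
      · simp [geom, one_apply, ha, ht, pow_succ]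
        split_ifs <;> ring
      · simp [geom, one_apply, ha, ht]
    · have : ¬ ([a] = [j]) := by simp [ha]
      simp [geom, one_apply, ha, this]

/-- Reversal of words, an anti-automorphism of the series ring. -/
def rev (f : NCSeries σ R) : NCSeries σ R := fun w => f w.reverse

theorem rev_mul (f g : NCSeries σ R) : rev (f * g) = rev g * rev f := by
  funext w
  show (f * g) w.reverse = _
  rw [mul_apply, mul_apply, List.length_reverse]
  calc ∑ n ∈ Finset.range (w.length + 1), f (w.reverse.take n) * g (w.reverse.drop n)
      = ∑ n ∈ Finset.range (w.length + 1),
          g ((w.take (w.length - n)).reverse) * f ((w.drop (w.length - n)).reverse) :=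
        Finset.sum_congr rfl fun n _ => by
          rw [List.take_reverse, List.drop_reverse, mul_comm]
    _ = ∑ n ∈ Finset.range (w.length + 1),
          g ((w.take n).reverse) * f ((w.drop n).reverse) := by
        have h := Finset.sum_range_reflect
          (fun n => g ((w.take n).reverse) * f ((w.drop n).reverse)) (w.length + 1)
        simpa using h
    _ = ∑ n ∈ Finset.range (w.length + 1), rev g (w.take n) * rev f (w.drop n) := rfl

theorem rev_one : rev (1 : NCSeries σ R) = 1 := by
  funext w
  simp [rev, one_apply]

theorem rev_geom (j : σ) : rev (geom j : NCSeries σ R) = geom j := by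
  funext w
  simp [rev, geom]

theorem rev_onePlusX (j : σ) : rev (1 + X j : NCSeries σ R) = 1 + X j := by
  funext w
  simp [rev, onePlusX_apply, List.reverse_eq_iff]

theorem geom_mul_onePlusX (j : σ) : (geom j : NCSeries σ R) * (1 + X j) = 1 := by
  have h1 : rev ((1 + X j : NCSeries σ R) * geom j) = rev 1 := by
    rw [onePlusX_mul_geom]
  rw [rev_mul, rev_geom, rev_onePlusX, rev_one] at h1
  exact h1

/-- `1 + X j` is a unit of the series ring, with inverse the geometric series
`1 - X_j + X_j^2 - ⋯`. -/
def magnusUnit (j : σ) : (NCSeries σ R)ˣ where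
  val := 1 + X j
  inv := geom j
  val_inv := onePlusX_mul_geom j
  inv_val := geom_mul_onePlusX j

end NCSeries

/-- The Magnus expansion: the group homomorphism from the free group on `σ`
to the units of the ring of formal power series in non-commuting variables
indexed by `σ`, sending the generator `x j` to `1 + X j`. -/
def magnus (R : Type*) [CommRing R] (σ : Type*) :
    FreeGroup σ →* (NCSeries σ R)ˣ :=
  FreeGroup.lift fun j => NCSeries.magnusUnit j

end

/-!
Write `g ≠ 1` as a reduced syllable word `x_{a₁}^{e₁} ⋯ x_{a_k}^{e_k}` with `k ≥ 1`, all `eⱼ ≠ 0`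
and `aⱼ ≠ aⱼ₊₁`. Each factor `(1 + X_{aⱼ})^{eⱼ}` is a series in `X_{aⱼ}` alone, equal to
`1 + eⱼ X_{aⱼ} + ⋯`, so a product of `k` such factors has no monomial `X_{b₁} ⋯ X_{b_m}` with
`m > k` and consecutive `bⱼ` distinct. Peeling off the first factor, the coefficient of
`X_{a₁} ⋯ X_{a_k}` in `M(g)` is therefore `e₁ ⋯ e_k ≠ 0`, while in `1` it is `0`.
-/

namespace NCSeries

variable {σ R : Type*} [CommRing R]

def SupportedOnPowers (a : σ) (f : NCSeries σ R) : Prop :=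
  ∀ w, ∀ x ∈ w, x ≠ a → f w = 0

def StutterFreeDegreeLE (m : ℕ) (f : NCSeries σ R) : Prop :=
  ∀ w : List σ, w.IsChain (· ≠ ·) → m < w.length → f w = 0

theorem mul_apply_nil (f g : NCSeries σ R) : (f * g) [] = f [] * g [] := by
  simp [mul_apply]

theorem mul_apply_singleton (f g : NCSeries σ R) (a : σ) :
    (f * g) [a] = f [] * g [a] + f [a] * g [] := by
  simp [mul_apply, Finset.sum_range_succ]

theorem supportedOnPowers_one (a : σ) : SupportedOnPowers a (1 : NCSeries σ R) := by
  rintro w x hx -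
  rw [one_apply, if_neg (List.ne_nil_of_mem hx)]

theorem supportedOnPowers_one_add_X (a : σ) :
    SupportedOnPowers a (1 + X a : NCSeries σ R) := by
  rintro w x hx hxa
  rw [onePlusX_apply, if_neg (List.ne_nil_of_mem hx), if_neg]
  rintro rfl
  exact hxa (List.mem_singleton.mp hx)

theorem supportedOnPowers_geom (a : σ) : SupportedOnPowers a (geom a : NCSeries σ R) := by
  intro w x hx hxa
  rw [geom, if_neg fun h => hxa (h x hx)]

theorem SupportedOnPowers.mul {a : σ} {f g : NCSeries σ R} (hf : SupportedOnPowers a f)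
    (hg : SupportedOnPowers a g) : SupportedOnPowers a (f * g) := by
  intro w x hx hxa
  rw [mul_apply]
  refine Finset.sum_eq_zero fun n _ => ?_
  rw [← List.take_append_drop n w, List.mem_append] at hx
  rcases hx with hx | hx
  · rw [hf _ x hx hxa, zero_mul]
  · rw [hg _ x hx hxa, mul_zero]

theorem SupportedOnPowers.mul_apply_cons {a : σ} {f : NCSeries σ R}
    (hf : SupportedOnPowers a f) (g : NCSeries σ R) {u : List σ}
    (hu : ∀ x ∈ u.head?, x ≠ a) :
    (f * g) (a :: u) = f [] * g (a :: u) + f [a] * g u := by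
  have hlong : ∀ n < u.length, f ((a :: u).take (n + 2)) = 0 := by
    intro n hn
    obtain ⟨b, t, rfl⟩ := List.exists_cons_of_length_pos (by omega : 0 < u.length)
    exact hf _ b (by simp) (hu b rfl)
  rw [mul_apply, List.length_cons, Finset.sum_range_succ', Finset.sum_range_succ',
    Finset.sum_eq_zero fun n hn => by rw [hlong n (Finset.mem_range.mp hn), zero_mul]]
  simp [add_comm]

theorem SupportedOnPowers.stutterFreeDegreeLE_one {a : σ} {f : NCSeries σ R}
    (hf : SupportedOnPowers a f) : StutterFreeDegreeLE 1 f := by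
  rintro (_ | ⟨x, _ | ⟨y, t⟩⟩) hw hlen
  · simp at hlen
  · simp at hlen
  have hxy : x ≠ y := (List.isChain_cons_cons.mp hw).1
  by_cases hxa : x = a
  · exact hf _ y (by simp) fun h => hxy (hxa.trans h.symm)
  · exact hf _ x (by simp) hxa

theorem stutterFreeDegreeLE_zero_one : StutterFreeDegreeLE 0 (1 : NCSeries σ R) := by
  intro w _ hlen
  rw [one_apply, if_neg (List.ne_nil_of_length_pos hlen)]

theorem StutterFreeDegreeLE.mul {m n : ℕ} {f g : NCSeries σ R} (hf : StutterFreeDegreeLE m f)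
    (hg : StutterFreeDegreeLE n g) : StutterFreeDegreeLE (m + n) (f * g) := by
  intro w hw hlen
  rw [mul_apply]
  refine Finset.sum_eq_zero fun k _ => ?_
  have hsplit : (w.take k).length + (w.drop k).length = w.length := by
    rw [← List.length_append, List.take_append_drop]
  by_cases hk : m < (w.take k).length
  · rw [hf _ (hw.take k) hk, zero_mul]
  · rw [hg _ (hw.drop k) (by omega), mul_zero]

theorem supportedOnPowers_magnusUnit_zpow (a : σ) (e : ℤ) :
    SupportedOnPowers a ((magnusUnit a ^ e : (NCSeries σ R)ˣ) : NCSeries σ R) := by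
  induction e using Int.induction_on with
  | zero => simpa using supportedOnPowers_one a
  | succ n ih =>
    rw [zpow_add_one, Units.val_mul]
    exact ih.mul (supportedOnPowers_one_add_X a)
  | pred n ih =>
    rw [zpow_sub_one, Units.val_mul]
    exact ih.mul (supportedOnPowers_geom a)

theorem magnusUnit_zpow_apply_nil (a : σ) (e : ℤ) :
    ((magnusUnit a ^ e : (NCSeries σ R)ˣ) : NCSeries σ R) [] = 1 := by
  induction e using Int.induction_on with
  | zero => simp [one_apply]
  | succ n ih =>
    rw [zpow_add_one, Units.val_mul, mul_apply_nil, ih]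
    simp [magnusUnit, onePlusX_apply]
  | pred n ih =>
    rw [zpow_sub_one, Units.val_mul, mul_apply_nil, ih]
    simp [magnusUnit, geom]

theorem magnusUnit_zpow_apply_singleton (a : σ) (e : ℤ) :
    ((magnusUnit a ^ e : (NCSeries σ R)ˣ) : NCSeries σ R) [a] = e := by
  induction e using Int.induction_on with
  | zero => simp [one_apply]
  | succ n ih =>
    rw [zpow_add_one, Units.val_mul, mul_apply_singleton, magnusUnit_zpow_apply_nil, ih]
    simp [magnusUnit, onePlusX_apply]
    ring
  | pred n ih =>
    rw [zpow_sub_one, Units.val_mul, mul_apply_singleton, magnusUnit_zpow_apply_nil, ih]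
    simp [magnusUnit, geom]
    ring

end NCSeries

namespace FreeGroup

variable {σ : Type*}

def ofSyllables (l : List (σ × ℤ)) : FreeGroup σ :=
  (l.map fun p => of p.1 ^ p.2).prod

theorem ofSyllables_cons (p : σ × ℤ) (l : List (σ × ℤ)) :
    ofSyllables (p :: l) = of p.1 ^ p.2 * ofSyllables l :=
  List.prod_cons

def IsReducedSyllables (l : List (σ × ℤ)) : Prop :=
  (∀ p ∈ l, p.2 ≠ 0) ∧ (l.map Prod.fst).IsChain (· ≠ ·)

theorem exists_isReducedSyllables_zpow_mul (a : σ) {e : ℤ} (he : e ≠ 0)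
    {l : List (σ × ℤ)} (hl : IsReducedSyllables l) :
    ∃ l', IsReducedSyllables l' ∧ ofSyllables l' = of a ^ e * ofSyllables l := by
  match l, hl with
  | [], _ => exact ⟨[(a, e)], by simp [IsReducedSyllables, he], rfl⟩
  | (b, f) :: t, ⟨hexp, hchain⟩ =>
    by_cases hab : a = b
    · subst hab
      by_cases hef : e + f = 0
      · refine ⟨t, ⟨fun p hp => hexp p (List.mem_cons_of_mem _ hp), hchain.tail⟩, ?_⟩
        rw [ofSyllables_cons, ← mul_assoc, ← zpow_add, hef, zpow_zero, one_mul]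
      · refine ⟨(a, e + f) :: t, ⟨?_, hchain⟩, ?_⟩
        · simpa [hef] using fun p hp => hexp p (List.mem_cons_of_mem _ hp)
        · rw [ofSyllables_cons, ofSyllables_cons, ← mul_assoc, ← zpow_add]
    · refine ⟨(a, e) :: (b, f) :: t, ⟨?_, List.isChain_cons_cons.mpr ⟨hab, hchain⟩⟩, rfl⟩
      simpa [he] using hexp

theorem exists_isReducedSyllables (g : FreeGroup σ) :
    ∃ l, IsReducedSyllables l ∧ ofSyllables l = g := by
  have hg : g ∈ Subgroup.closure (Set.range of) := by simp [closure_range_of]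
  induction hg using Subgroup.closure_induction_left with
  | one => exact ⟨[], ⟨by simp, List.isChain_nil⟩, rfl⟩
  | mul_left x hx y _ ih =>
    obtain ⟨⟨a, rfl⟩, ⟨l, hl, rfl⟩⟩ := And.intro hx ih
    simpa using exists_isReducedSyllables_zpow_mul a one_ne_zero hl
  | inv_mul_cancel x hx y _ ih =>
    obtain ⟨⟨a, rfl⟩, ⟨l, hl, rfl⟩⟩ := And.intro hx ih
    simpa using exists_isReducedSyllables_zpow_mul a (by norm_num : (-1 : ℤ) ≠ 0) hl

end FreeGroup

open NCSeries
open FreeGroup (ofSyllables ofSyllables_cons exists_isReducedSyllables lift_apply_of)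

section

variable (R : Type*) [CommRing R] {σ : Type*}

theorem magnus_ofSyllables_cons (p : σ × ℤ) (l : List (σ × ℤ)) :
    magnus R σ (ofSyllables (p :: l)) = magnusUnit p.1 ^ p.2 * magnus R σ (ofSyllables l) := by
  rw [ofSyllables_cons, map_mul, map_zpow, magnus, lift_apply_of]

theorem stutterFreeDegreeLE_magnus_ofSyllables (l : List (σ × ℤ)) :
    StutterFreeDegreeLE l.length (magnus R σ (ofSyllables l) : NCSeries σ R) := by
  induction l with
  | nil => simpa [ofSyllables] using stutterFreeDegreeLE_zero_one
  | cons p l ih =>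
    rw [magnus_ofSyllables_cons, Units.val_mul, List.length_cons, add_comm]
    exact (supportedOnPowers_magnusUnit_zpow p.1 p.2).stutterFreeDegreeLE_one.mul ih

theorem magnus_ofSyllables_apply_map_fst {l : List (σ × ℤ)}
    (hl : (l.map Prod.fst).IsChain (· ≠ ·)) :
    (magnus R σ (ofSyllables l) : NCSeries σ R) (l.map Prod.fst) =
      (l.map fun p => (p.2 : R)).prod := by
  induction l with
  | nil => simp [ofSyllables, one_apply]
  | cons p l ih =>
    rw [List.map_cons, List.isChain_cons] at hl
    rw [List.map_cons, magnus_ofSyllables_cons, Units.val_mul,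
      (supportedOnPowers_magnusUnit_zpow p.1 p.2).mul_apply_cons _ fun x hx => (hl.1 x hx).symm,
      stutterFreeDegreeLE_magnus_ofSyllables R l _ (List.isChain_cons.mpr hl) (by simp),
      ih hl.2, magnusUnit_zpow_apply_singleton]
    simp

theorem magnus_injective_of_charZero [NoZeroDivisors R] [CharZero R] :
    Function.Injective (magnus R σ) := by
  refine (injective_iff_map_eq_one _).mpr fun g hg => ?_
  obtain ⟨l, hl, rfl⟩ := exists_isReducedSyllables g
  cases l with
  | nil => rfl
  | cons p l =>
    have hcoeff := magnus_ofSyllables_apply_map_fst R hl.2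
    rw [hg, Units.val_one, one_apply, if_neg (by simp)] at hcoeff
    refine absurd hcoeff.symm (List.prod_ne_zero fun h0 => ?_)
    obtain ⟨q, hq, hq0⟩ := List.mem_map.mp h0
    exact hl.1 q hq (Int.cast_eq_zero.mp hq0)

end

/-- The Magnus expansion `M : F_i → ℤ⟨⟨X₁,…,X_i⟩⟩ˣ`, the group homomorphism
sending each generator `x j` to `1 + X j`, is injective. -/
theorem magnus_injective (i : ℕ) :
    Function.Injective (magnus ℤ (Fin i)) :=
  magnus_injective_of_charZero ℤ
end

section
/- For all n ≥ 1 and l ≥ 1: (1/n) Σ_{m|n} μ(n/m) Σ_{i=1}^{l-1} i^m = Σ_{j=1}^{l} (l choose j) · [(1/n) Σ_{m|n} μ(n/m) sur(m, j-1)], where sur(m,k) is the number of surjections from an m-element set onto a k-element set (with sur(m,0)=0 for m>0). -/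
/-- `sur m k` is the number of surjections from an `m`-element set onto a
`k`-element set. Note `sur m 0 = 0` for `m > 0` automatically. -/
noncomputable def sur (m k : ℕ) : ℕ :=
  Nat.card {f : Fin m → Fin k // Function.Surjective f}

/-!
Classifying the maps `Fin m → Fin i` by their image gives `i ^ m = ∑ k, (i choose k) * sur m k`.
Summing over `i < l` with the hockey-stick identity `∑ i < l, (i choose k) = l choose (k + 1)`
gives `∑ i < l, i ^ m = ∑ k < l, (l choose (k + 1)) * sur m k`. For `m ≥ 1`, in particular for
every divisor `m` of `n`, the term `i = 0` vanishes, so the inner sums on both sides agree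
termwise in `m`, and the theorem follows by linearity of the Möbius sum.
-/

open Finset Function

theorem card_surjective_eq_sur (α β : Type*) [Fintype α] [Fintype β] :
    Nat.card {f : α → β // Surjective f} = sur (Fintype.card α) (Fintype.card β) :=
  Nat.card_congr <| Equiv.subtypeEquiv ((Fintype.equivFin α).arrowCongr (Fintype.equivFin β))
    fun f => by
      change Surjective f ↔ Surjective (Fintype.equivFin β ∘ f ∘ (Fintype.equivFin α).symm)
      rw [Equiv.comp_surjective, Equiv.surjective_comp]

def imageEqEquivSurjective {α β : Type*} [Fintype α] [DecidableEq β] (S : Finset β) :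
    {f : α → β // univ.image f = S} ≃ {g : α → S // Surjective g} where
  toFun f := ⟨fun a => ⟨f.1 a, by obtain ⟨f, rfl⟩ := f; exact mem_image_of_mem f (mem_univ a)⟩,
    fun b => by
      obtain ⟨f, rfl⟩ := f
      obtain ⟨a, -, ha⟩ := mem_image.1 b.2
      exact ⟨a, Subtype.ext ha⟩⟩
  invFun g := ⟨Subtype.val ∘ g.1, by
    ext b
    simp only [mem_image, mem_univ, true_and, comp_apply]
    exact ⟨fun ⟨a, ha⟩ => ha ▸ (g.1 a).2, fun hb => (g.2 ⟨b, hb⟩).imp fun a ha => by rw [ha]⟩⟩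
  left_inv _ := rfl
  right_inv _ := rfl

theorem card_fun_image_eq_sur {α β : Type*} [Fintype α] [DecidableEq β] (S : Finset β) :
    Nat.card {f : α → β // univ.image f = S} = sur (Fintype.card α) #S := by
  rw [Nat.card_congr (imageEqEquivSurjective S), card_surjective_eq_sur, Fintype.card_coe]

theorem card_pow_card_eq_sum_choose_mul_sur (α β : Type*) [Fintype α] [Fintype β] :
    Fintype.card β ^ Fintype.card α =
      ∑ k ∈ range (Fintype.card β + 1), (Fintype.card β).choose k * sur (Fintype.card α) k := by
  classical
  calc Fintype.card β ^ Fintype.card α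
      = ∑ S ∈ (univ : Finset β).powerset, #{f : α → β | univ.image f = S} := by
        rw [← Fintype.card_fun, ← card_univ, powerset_univ]
        exact card_eq_sum_card_fiberwise fun _ _ => mem_univ _
    _ = ∑ S ∈ (univ : Finset β).powerset, sur (Fintype.card α) #S := by
        refine sum_congr rfl fun S _ => ?_
        rw [← card_fun_image_eq_sur, ← Fintype.card_subtype, Nat.card_eq_fintype_card]
    _ = _ := by rw [sum_powerset_apply_card, card_univ]; rfl

theorem pow_eq_sum_choose_mul_sur (i m : ℕ) :
    i ^ m = ∑ k ∈ range (i + 1), i.choose k * sur m k := by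
  simpa using card_pow_card_eq_sum_choose_mul_sur (Fin m) (Fin i)

theorem sum_range_choose_eq_choose_succ (l k : ℕ) :
    ∑ i ∈ range l, i.choose k = l.choose (k + 1) := by
  induction l with
  | zero => simp
  | succ l ih => rw [sum_range_succ, ih, Nat.choose_succ_succ, add_comm]

theorem sum_range_pow_eq_sum_choose_mul_sur (l m : ℕ) :
    ∑ i ∈ range l, i ^ m = ∑ k ∈ range l, l.choose (k + 1) * sur m k := by
  have extend : ∀ i ∈ range l, i ^ m = ∑ k ∈ range l, i.choose k * sur m k := fun i hi => by
    rw [pow_eq_sum_choose_mul_sur]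
    refine sum_subset (range_subset_range.2 (mem_range.1 hi)) fun k _ hk => ?_
    rw [Nat.choose_eq_zero_of_lt (by simpa using hk), zero_mul]
  rw [sum_congr rfl extend, sum_comm]
  simp_rw [← sum_mul, sum_range_choose_eq_choose_succ]

theorem sum_Icc_pow_eq_sum_choose_mul_sur (l : ℕ) {m : ℕ} (hm : m ≠ 0) :
    ∑ i ∈ Icc 1 (l - 1), i ^ m = ∑ j ∈ Icc 1 l, l.choose j * sur m (j - 1) := by
  have lhs : ∑ i ∈ Icc 1 (l - 1), i ^ m = ∑ i ∈ range l, i ^ m := by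
    rcases l with _ | l
    · rfl
    · rw [sum_range_succ', zero_pow hm, add_zero, ← Ico_add_one_right_eq_Icc]
      simp [sum_Ico_eq_sum_range, add_comm]
  rw [lhs, sum_range_pow_eq_sum_choose_mul_sur, ← Ico_add_one_right_eq_Icc, sum_Ico_eq_sum_range]
  simp [add_comm]

theorem phi_eq_sum_choose_psi_general (n l : ℕ) :
    (1 / n : ℚ) * ∑ m ∈ n.divisors,
        ((ArithmeticFunction.moebius (n / m) : ℤ) : ℚ) *
          ∑ i ∈ Finset.Icc 1 (l - 1), (i : ℚ) ^ m =
      ∑ j ∈ Finset.Icc 1 l, (l.choose j : ℚ) *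
        ((1 / n : ℚ) * ∑ m ∈ n.divisors,
          ((ArithmeticFunction.moebius (n / m) : ℤ) : ℚ) * (sur m (j - 1) : ℚ)) := by
  have key (m : ℕ) (hm : m ∈ n.divisors) :
      ∑ i ∈ Icc 1 (l - 1), (i : ℚ) ^ m = ∑ j ∈ Icc 1 l, (l.choose j : ℚ) * sur m (j - 1) := by
    exact_mod_cast sum_Icc_pow_eq_sum_choose_mul_sur l (Nat.pos_of_mem_divisors hm).ne'
  rw [sum_congr rfl fun m hm => by rw [key m hm]]
  simp_rw [mul_sum]
  rw [sum_comm]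
  refine sum_congr rfl fun j _ => sum_congr rfl fun m _ => by ring

/-- For all `n ≥ 1` and `l ≥ 1`:
`(1/n) Σ_{m∣n} μ(n/m) Σ_{i=1}^{l-1} i^m
  = Σ_{j=1}^{l} (l choose j) ⬝ (1/n) Σ_{m∣n} μ(n/m) sur(m, j-1)`. -/
theorem phi_eq_sum_choose_psi (n l : ℕ) (hn : 1 ≤ n) (hl : 1 ≤ l) :
    (1 / n : ℚ) * ∑ m ∈ n.divisors,
        ((ArithmeticFunction.moebius (n / m) : ℤ) : ℚ) *
          ∑ i ∈ Finset.Icc 1 (l - 1), (i : ℚ) ^ m =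
      ∑ j ∈ Finset.Icc 1 l, (l.choose j : ℚ) *
        ((1 / n : ℚ) * ∑ m ∈ n.divisors,
          ((ArithmeticFunction.moebius (n / m) : ℤ) : ℚ) * (sur m (j - 1) : ℚ)) :=
  phi_eq_sum_choose_psi_general n l
end
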